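/- Let I be a finite index set with an involution * : I → I, and let (A_j)_{j ∈ I} be a family of real matrices indexed by I × I such that A_{j*} = A_jᵀ for all j. Suppose there is a vector d ∈ ℂ^I with all entries nonzero such that A_j d = d_j d for every j ∈ I. Then for every j ∈ I, the product d_j · d_{j*} is a positive real number. -/
import Mathlib

open Matrix

theorem paired_eigenvalues_positive
    {I : Type*} [Fintype I] [DecidableEq I]
    (star : I → I) (hstar : ∀ i, star (star i) = i)
    (A : I → Matrix I I ℝ)
    (hA : ∀ j, A (star j) = (A j)ᵀ)
    (d : I → ℂ) (hd : ∀ i, d i ≠ 0)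
    (heig : ∀ j, ((A j).map (Complex.ofReal)).mulVec d = d j • d) :
    ∀ j, (d j * d (star j)).im = 0 ∧ 0 < (d j * d (star j)).re := by
  intro j
  set B : Matrix I I ℂ := (A j).map Complex.ofReal with hB
  have hBt : (A (star j)).map Complex.ofReal = Bᵀ := by
    rw [hA, hB, Matrix.transpose_map]
  have h1 : B.mulVec d = d j • d := heig j
  have h2 : Bᵀ.mulVec d = d (star j) • d := by rw [← hBt]; exact heig (star j)
  set N : ℂ := ∑ i, (starRingEnd ℂ) (d i) * d i with hNdef
  have hNval : N = ((∑ i, Complex.normSq (d i) : ℝ) : ℂ) := by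
    push_cast
    refine Finset.sum_congr rfl fun i _ => ?_
    rw [Complex.normSq_eq_conj_mul_self]
  have hNr : (0:ℝ) < ∑ i, Complex.normSq (d i) := by
    refine Finset.sum_pos (fun i _ => ?_) ⟨j, Finset.mem_univ j⟩
    exact Complex.normSq_pos.mpr (hd i)
  have hNne : N ≠ 0 := by
    rw [hNval]
    exact_mod_cast ne_of_gt hNr
  have hBconj : (Bᵀ)ᴴ = B := by
    ext k i
    simp [hB, Matrix.conjTranspose_apply, Matrix.map_apply]
  have key : dotProduct (Star.star d) (B.mulVec (Bᵀ.mulVec d))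
      = dotProduct (Star.star (Bᵀ.mulVec d)) (Bᵀ.mulVec d) := by
    rw [Matrix.star_mulVec, hBconj, Matrix.dotProduct_mulVec]
  have hLHS : dotProduct (Star.star d) (B.mulVec (Bᵀ.mulVec d))
      = (d j * d (star j)) * N := by
    rw [h2, Matrix.mulVec_smul, h1, hNdef, Finset.mul_sum]
    simp only [dotProduct, Pi.star_apply, Pi.smul_apply, smul_eq_mul,
      Complex.star_def]
    refine Finset.sum_congr rfl fun k _ => by ring
  have hRHS : dotProduct (Star.star (Bᵀ.mulVec d)) (Bᵀ.mulVec d)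
      = ((Complex.normSq (d (star j)) : ℝ) : ℂ) * N := by
    rw [h2, hNdef, Finset.mul_sum]
    simp only [dotProduct, Pi.star_apply, Pi.smul_apply, smul_eq_mul,
      Complex.star_def, _root_.map_mul]
    refine Finset.sum_congr rfl fun i _ => ?_
    rw [Complex.normSq_eq_conj_mul_self]
    push_cast
    ring
  have hmain : d j * d (star j) = ((Complex.normSq (d (star j)) : ℝ) : ℂ) :=
    mul_right_cancel₀ hNne (hLHS ▸ hRHS ▸ key)
  constructor
  · rw [hmain]; simp
  · rw [hmain]
    simpa using Complex.normSq_pos.mpr (hd (star j))
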